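/- arXiv:2205.07801 — 2 statements merged into one kernel-verified Lean document; each statement's English description precedes it below -/
import Mathlib

section
/- Let π: X → B be a rational elliptic surface over a number field k with zero section over k, and let F be a fiber of type I_n* with n ≥ 1 that is the unique fiber of its type. Then the near components Θ₀, Θ₁ and all multiplicity-2 components of F are defined over k, while the two far components Θ₂, Θ₃ are defined over an extension of k of degree at most 2. -/
/-- The dual graph of a fiber of type `Iₙ*` (`n ≥ 1`, affine `D̃ₙ₊₄` diagram) together
with the zero section.  Vertices: `none` is the zero section `O`; `some i` is the
component `Θᵢ`.  The reduced near components `Θ₀, Θ₁` meet `Θ₄`, the reduced far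
components `Θ₂, Θ₃` meet `Θₙ₊₄`, and `Θ₄, Θ₅, …, Θₙ₊₄` form the chain of
multiplicity-2 components; `O` meets `Θ₀`. -/
def adjInStar (n : ℕ) : Option (Fin (n + 5)) → Option (Fin (n + 5)) → Prop :=
  fun a b =>
    match a, b with
    | none, none => False
    | none, some j => j.val = 0
    | some i, none => i.val = 0
    | some i, some j =>
        (i.val = 0 ∧ j.val = 4) ∨ (j.val = 0 ∧ i.val = 4) ∨
        (i.val = 1 ∧ j.val = 4) ∨ (j.val = 1 ∧ i.val = 4) ∨
        (i.val = 2 ∧ j.val = n + 4) ∨ (j.val = 2 ∧ i.val = n + 4) ∨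
        (i.val = 3 ∧ j.val = n + 4) ∨ (j.val = 3 ∧ i.val = n + 4) ∨
        (4 ≤ i.val ∧ j.val = i.val + 1) ∨ (4 ≤ j.val ∧ i.val = j.val + 1)

/-- Multiplicities of the components of an `Iₙ*` fiber: the components `Θᵢ` with
`i ≥ 4` have multiplicity `2`, the others (and the zero section) multiplicity `1`. -/
def multInStar (n : ℕ) : Option (Fin (n + 5)) → ℕ :=
  fun v => match v with
  | none => 1
  | some i => if 4 ≤ i.val then 2 else 1

/-! A symmetry fixing the zero section fixes `Θ₀`, its only neighbour among the
components. Walking along the multiplicity-2 chain from `Θ₀`, each `Θᵢ₊₁` is the only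
multiplicity-2 neighbour of the already fixed `Θᵢ` other than the fixed `Θᵢ₋₁`, so the whole
chain is fixed. Then `Θ₁` is a reduced neighbour of the fixed `Θ₄` other than `Θ₀`, and
`Θ₂, Θ₃` are the reduced neighbours of the fixed end `Θₙ₊₄`, so they can only be swapped.
For `n ≥ 1` the two ends `Θ₄` and `Θₙ₊₄` of the chain are distinct, which is what keeps
`Θ₁` apart from `Θ₂, Θ₃`. -/

structure IsInStarAut (n : ℕ) (σ : Equiv.Perm (Option (Fin (n + 5)))) : Prop where
  adj_iff : ∀ a b, adjInStar n (σ a) (σ b) ↔ adjInStar n a b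
  mult_eq : ∀ v, multInStar n (σ v) = multInStar n v
  apply_none : σ none = none

namespace IsInStarAut

variable {n : ℕ} {σ : Equiv.Perm (Option (Fin (n + 5)))}

theorem exists_apply_some (hσ : IsInStarAut n σ) (i : Fin (n + 5)) :
    ∃ j, σ (some i) = some j :=
  Option.ne_none_iff_exists'.mp fun h =>
    Option.some_ne_none i (σ.injective (h.trans hσ.apply_none.symm))

theorem four_le_iff_of_apply_eq (hσ : IsInStarAut n σ) {i j : Fin (n + 5)}
    (hj : σ (some i) = some j) : 4 ≤ j.val ↔ 4 ≤ i.val := by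
  have hm := hσ.mult_eq (some i)
  rw [hj] at hm
  exact ⟨fun hj => by_contra fun hi => by simp [multInStar, hj, hi] at hm,
    fun hi => by_contra fun hj => by simp [multInStar, hj, hi] at hm⟩

theorem adj_apply_of_apply_eq_self (hσ : IsInStarAut n σ) {u v : Option (Fin (n + 5))}
    (hu : σ u = u) (hvu : adjInStar n v u) : adjInStar n (σ v) u := by
  rw [← hu]
  exact (hσ.adj_iff v u).mpr hvu

theorem apply_of_val_eq_zero (hσ : IsInStarAut n σ) {i : Fin (n + 5)} (hi : i.val = 0) :
    σ (some i) = some i := by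
  obtain ⟨j, hj⟩ := hσ.exists_apply_some i
  have hadj := hσ.adj_apply_of_apply_eq_self hσ.apply_none (v := some i) hi
  rw [hj] at hadj ⊢
  exact congrArg some (Fin.ext (hadj.trans hi.symm))

theorem apply_of_four_le (hσ : IsInStarAut n σ) {i : Fin (n + 5)} (hi : 4 ≤ i.val) :
    σ (some i) = some i := by
  suffices chain : ∀ m, ∀ i : Fin (n + 5), 4 ≤ i.val → i.val ≤ 4 + m → σ (some i) = some i from
    chain i.val i hi (by omega)
  intro m
  induction m with
  | zero =>
    intro k hk4 hk
    obtain ⟨j, hj⟩ := hσ.exists_apply_some k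
    have hadj := hσ.adj_apply_of_apply_eq_self (hσ.apply_of_val_eq_zero (i := ⟨0, by omega⟩) rfl)
      (v := some k) (by simp only [adjInStar, true_and]; omega)
    rw [hj] at hadj ⊢
    simp only [adjInStar] at hadj
    exact congrArg some (Fin.ext (by omega))
  | succ m ih =>
    intro k hk4 hk
    by_cases hle : k.val ≤ 4 + m
    · exact ih k hk4 hle
    obtain ⟨j, hj⟩ := hσ.exists_apply_some k
    have hj4 := hσ.four_le_iff_of_apply_eq hj
    have hadj := hσ.adj_apply_of_apply_eq_self (ih ⟨4 + m, by omega⟩ (by simp) le_rfl)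
      (v := some k) (by simp only [adjInStar]; omega)
    rw [hj] at hadj ⊢
    simp only [adjInStar] at hadj
    -- the other multiplicity-2 neighbour `Θ₃₊ₘ` of `Θ₄₊ₘ` is already fixed, hence not `σ Θₖ`
    have hj_ne : j.val ≠ 3 + m := by
      intro hj3
      have := σ.injective (hj.trans (ih j (by omega) (by omega)).symm)
      simp only [Option.some.injEq, Fin.ext_iff] at this
      omega
    exact congrArg some (Fin.ext (by omega))

theorem apply_of_val_eq_one (hσ : IsInStarAut n σ) (hn : 1 ≤ n) {i : Fin (n + 5)}
    (hi : i.val = 1) : σ (some i) = some i := by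
  obtain ⟨j, hj⟩ := hσ.exists_apply_some i
  have hj4 := hσ.four_le_iff_of_apply_eq hj
  have hadj := hσ.adj_apply_of_apply_eq_self (hσ.apply_of_four_le (i := ⟨4, by omega⟩) le_rfl)
    (v := some i) (by simp only [adjInStar, and_true]; omega)
  rw [hj] at hadj ⊢
  simp only [adjInStar] at hadj
  have hj_ne : j.val ≠ 0 := by
    intro hj0
    have := σ.injective (hj.trans (hσ.apply_of_val_eq_zero hj0).symm)
    simp only [Option.some.injEq, Fin.ext_iff] at this
    omega
  exact congrArg some (Fin.ext (by omega))

theorem val_eq_two_or_three_of_apply_eq (hσ : IsInStarAut n σ) (hn : 1 ≤ n) {i j : Fin (n + 5)}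
    (hi : i.val = 2 ∨ i.val = 3) (hj : σ (some i) = some j) : j.val = 2 ∨ j.val = 3 := by
  have hj4 := hσ.four_le_iff_of_apply_eq hj
  have hadj := hσ.adj_apply_of_apply_eq_self
    (hσ.apply_of_four_le (i := ⟨n + 4, by omega⟩) (by simp))
    (v := some i) (by simp only [adjInStar, and_true]; omega)
  rw [hj] at hadj
  simp only [adjInStar] at hadj
  omega

end IsInStarAut

/-- Let `π : X → B` be a rational elliptic surface over a number field
`k` with zero section over `k`, and `F` a fiber of type `Iₙ*`, `n ≥ 1`, which is the
unique fiber of its type.  The Galois group acts on the components and the zero section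
(fixing it) preserving intersections and multiplicities.  Then the near components
`Θ₀, Θ₁` and all multiplicity-2 components are defined over `k`, while the far
components `Θ₂, Θ₃` are defined over an extension of `k` of degree at most `2`
(their Galois orbits have at most 2 elements). -/
theorem InStar_components_fields_of_definition (n : ℕ) (hn : 1 ≤ n)
    {G : Type} [Group G]
    (ρ : G →* Equiv.Perm (Option (Fin (n + 5))))
    (hadj : ∀ (g : G) (a b : Option (Fin (n + 5))),
      adjInStar n (ρ g a) (ρ g b) ↔ adjInStar n a b)
    (hmult : ∀ (g : G) (v : Option (Fin (n + 5))), multInStar n (ρ g v) = multInStar n v)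
    (hO : ∀ g : G, ρ g none = none) :
    (∀ g : G, ρ g (some ⟨0, by omega⟩) = some ⟨0, by omega⟩) ∧
    (∀ g : G, ρ g (some ⟨1, by omega⟩) = some ⟨1, by omega⟩) ∧
    (∀ (g : G) (i : Fin (n + 5)), 4 ≤ i.val → ρ g (some i) = some i) ∧
    (∀ i : Fin (n + 5), i.val = 2 ∨ i.val = 3 →
      (Set.range fun g : G => ρ g (some i)).ncard ≤ 2) := by
  have hρ (g : G) : IsInStarAut n (ρ g) := ⟨hadj g, hmult g, hO g⟩
  refine ⟨fun g => (hρ g).apply_of_val_eq_zero rfl, fun g => (hρ g).apply_of_val_eq_one hn rfl,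
    fun g i hi => (hρ g).apply_of_four_le hi, fun i hi => ?_⟩
  have hsub : (Set.range fun g : G => ρ g (some i)) ⊆ {some ⟨2, by omega⟩, some ⟨3, by omega⟩} := by
    rintro _ ⟨g, rfl⟩
    obtain ⟨j, hj⟩ := (hρ g).exists_apply_some i
    simp only [hj, Set.mem_insert_iff, Set.mem_singleton_iff, Option.some.injEq, Fin.ext_iff]
    exact (hρ g).val_eq_two_or_three_of_apply_eq hn hi hj
  exact (Set.ncard_le_ncard hsub).trans (Set.ncard_pair (by simp)).le
end

section
/- Let π: X → P¹ be a rational elliptic surface with a non-reduced fiber F, and let D ⊂ X be a genus-0 bisection of π whose degree-2 map φ = π|_D: D → P¹ is ramified at the point under F. Then the normalization X_D of the base change X ×_π D is again a rational elliptic surface, i.e. e(X_D) = 12. -/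
/- Ramification at the non-reduced fiber `F` replaces it by a fiber of Euler number
`2 e(F) - 12`, while every other fiber contributes twice; hence
`e(X_D) = 2 e(X) - 12 = 12`. -/

/-- Kodaira types of singular fibers of an elliptic fibration. -/
inductive KodairaType : Type
  | In (n : ℕ)
  | InStar (n : ℕ)
  | II | III | IV | IVStar | IIIStar | IIStar
  deriving DecidableEq

/-- The Euler number of a singular fiber of each Kodaira type. -/
def eulerNumber : KodairaType → ℕ
  | .In n => n
  | .InStar n => n + 6
  | .II => 2
  | .III => 3
  | .IV => 4
  | .IVStar => 8
  | .IIIStar => 9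
  | .IIStar => 10

/-- A Kodaira type is non-reduced iff it is `Iₙ*`, `IV*`, `III*` or `II*`. -/
def NonReduced : KodairaType → Prop
  | .InStar _ => True
  | .IVStar => True
  | .IIIStar => True
  | .IIStar => True
  | _ => False

/-- Transformation of a Kodaira fiber type under a quadratic base change ramified at
that fiber (Miranda VI.4.1): `Iₙ ↦ I₂ₙ`, `Iₙ* ↦ I₂ₙ`, `II ↦ IV`, `II* ↦ IV*`,
`III ↦ I₀*`, `III* ↦ I₀*`, `IV ↦ IV*`, `IV* ↦ IV`. -/
def quadBC : KodairaType → KodairaType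
  | .In n => .In (2 * n)
  | .InStar n => .In (2 * n)
  | .II => .IV
  | .IIStar => .IVStar
  | .III => .InStar 0
  | .IIIStar => .InStar 0
  | .IV => .IVStar
  | .IVStar => .IV

theorem eulerNumber_quadBC_of_nonReduced {t : KodairaType} (h : NonReduced t) :
    (eulerNumber (quadBC t) : ℤ) = 2 * eulerNumber t - 12 := by
  cases t <;> simp_all [NonReduced, quadBC, eulerNumber]; omega

/-- Let `π : X → ℙ¹` be a rational elliptic surface (so the Euler
numbers of its singular fibers, indexed by `ι` with types `T`, sum to `e(X) = 12`),
`F = T i₀` a non-reduced fiber, and `D` a genus-0 bisection whose degree-2 map to `ℙ¹`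
ramifies at the point under `F` (its second branch point lying under a reduced fiber).
Then the normalization `X_D` of `X ×_π D` — whose Euler number is that of the
transformed fiber above `F` plus twice the Euler numbers of the remaining singular
fibers — satisfies `e(X_D) = 12`, i.e. `X_D` is again a rational elliptic surface. -/
theorem base_change_at_nonreduced_fiber_is_rational
    {ι : Type} [Fintype ι] [DecidableEq ι] (T : ι → KodairaType) (i₀ : ι)
    (hnr : NonReduced (T i₀))
    (hsum : ∑ i, (eulerNumber (T i) : ℤ) = 12)
    (eXD : ℤ)
    (heXD : eXD = (eulerNumber (quadBC (T i₀)) : ℤ)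
        + ∑ i ∈ Finset.univ.erase i₀, 2 * (eulerNumber (T i) : ℤ)) :
    eXD = 12 := by
  have hrest : ∑ i ∈ Finset.univ.erase i₀, (eulerNumber (T i) : ℤ)
      = 12 - eulerNumber (T i₀) := by
    rw [Finset.sum_erase_eq_sub (Finset.mem_univ i₀), hsum]
  rw [heXD, eulerNumber_quadBC_of_nonReduced hnr, ← Finset.mul_sum, hrest]
  ring
end
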